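/- arXiv:2509.22037 — 5 statements merged into one kernel-verified Lean document; each statement's English description precedes it below -/
import Mathlib

section
/- Let (α_n) and (β_n) be sequences of positive real numbers such that α_n → 0 and β_n → ∞, with (β_n) monotonically increasing. Then there exists a sequence (α_n') of positive real numbers such that: (1) α_n' ≥ α_n for all n; (2) (α_n') is decreasing and converges to 0; (3) the sequence (α_n' β_n) is non-decreasing. -/
/-!
Take `α' n = ⨆ m, α m * min (β m / β n) 1`. The term `m = n` gives `α n ≤ α' n`. Since `β` is
increasing, every term decreases in `n`, while the term times `β n`, namely `α m * min (β m) (β n)`,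
increases in `n`; hence `α'` is antitone and `α' * β` is monotone. For the limit, if `α m ≤ ε` for
`m ≥ M`, the finitely many terms with `m < M` are at most `(∑ m < M, α m * β m) / β n → 0`.
-/

open Filter Topology

noncomputable def decreasingMajorant (α β : ℕ → ℝ) (n : ℕ) : ℝ :=
  ⨆ m, α m * min (β m / β n) 1

section DecreasingMajorant

variable {α β : ℕ → ℝ}

lemma bddAbove_range_mul_min_div (hα : ∀ m, 0 ≤ α m) (hαb : BddAbove (Set.range α)) (n : ℕ) :
    BddAbove (Set.range fun m => α m * min (β m / β n) 1) := by
  obtain ⟨C, hC⟩ := hαb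
  refine ⟨C, ?_⟩
  rintro _ ⟨m, rfl⟩
  exact (mul_le_of_le_one_right (hα m) (min_le_right _ _)).trans (hC ⟨m, rfl⟩)

lemma le_decreasingMajorant (hα : ∀ m, 0 ≤ α m) (hαb : BddAbove (Set.range α))
    (hβ : ∀ n, 0 < β n) (n : ℕ) : α n ≤ decreasingMajorant α β n := by
  have hterm : α n * min (β n / β n) 1 = α n := by simp [div_self (hβ n).ne']
  exact hterm ▸ le_ciSup (bddAbove_range_mul_min_div hα hαb n) n

lemma antitone_decreasingMajorant (hα : ∀ m, 0 ≤ α m) (hαb : BddAbove (Set.range α))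
    (hβ : ∀ n, 0 < β n) (hβmono : Monotone β) : Antitone (decreasingMajorant α β) := by
  intro n n' hnn'
  refine ciSup_mono (bddAbove_range_mul_min_div hα hαb n) fun m => ?_
  exact mul_le_mul_of_nonneg_left
    (min_le_min_right 1 (div_le_div_of_nonneg_left (hβ m).le (hβ n) (hβmono hnn'))) (hα m)

lemma monotone_decreasingMajorant_mul (hα : ∀ m, 0 ≤ α m) (hαb : BddAbove (Set.range α))
    (hβ : ∀ n, 0 < β n) (hβmono : Monotone β) :
    Monotone fun n => decreasingMajorant α β n * β n := by
  have hterm (m n : ℕ) : α m * min (β m / β n) 1 * β n = α m * min (β m) (β n) := by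
    rw [mul_assoc, min_mul_of_nonneg _ _ (hβ n).le, div_mul_cancel₀ _ (hβ n).ne', one_mul]
  intro n n' hnn'
  dsimp only
  rw [decreasingMajorant, Real.iSup_mul_of_nonneg (hβ n).le]
  refine ciSup_le fun m => ?_
  calc α m * min (β m / β n) 1 * β n
      ≤ α m * min (β m / β n') 1 * β n' := by
        rw [hterm, hterm]
        gcongr
        · exact hα m
        · exact hβmono hnn'
    _ ≤ decreasingMajorant α β n' * β n' := by
        gcongr
        · exact (hβ n').le
        · exact le_ciSup (bddAbove_range_mul_min_div hα hαb n') m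

lemma decreasingMajorant_le_max (hα : ∀ m, 0 ≤ α m) (hβ : ∀ n, 0 < β n) {M : ℕ} {ε : ℝ}
    (hε : ∀ m ≥ M, α m ≤ ε) (n : ℕ) :
    decreasingMajorant α β n ≤ max ε ((∑ m ∈ Finset.range M, α m * β m) / β n) := by
  refine ciSup_le fun m => ?_
  rcases le_or_gt M m with hm | hm
  · exact (mul_le_of_le_one_right (hα m) (min_le_right _ _)).trans
      ((hε m hm).trans (le_max_left _ _))
  · refine le_max_of_le_right ?_
    calc α m * min (β m / β n) 1 ≤ α m * (β m / β n) := by gcongr; exacts [hα m, min_le_left _ _]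
      _ = α m * β m / β n := (mul_div_assoc _ _ _).symm
      _ ≤ (∑ m ∈ Finset.range M, α m * β m) / β n := by
        gcongr
        · exact (hβ n).le
        · exact Finset.single_le_sum (fun k _ => mul_nonneg (hα k) (hβ k).le)
            (Finset.mem_range.2 hm)

lemma tendsto_decreasingMajorant (hα : ∀ m, 0 < α m) (hα0 : Tendsto α atTop (𝓝 0))
    (hβ : ∀ n, 0 < β n) (hβtop : Tendsto β atTop atTop) :
    Tendsto (decreasingMajorant α β) atTop (𝓝 0) := by
  have hαnn : ∀ m, 0 ≤ α m := fun m => (hα m).le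
  refine tendsto_order.2 ⟨fun a ha => Eventually.of_forall fun n =>
    ha.trans ((hα n).trans_le (le_decreasingMajorant hαnn hα0.bddAbove_range hβ n)), ?_⟩
  intro ε hε
  obtain ⟨M, hM⟩ := eventually_atTop.1 (hα0.eventually (ge_mem_nhds (half_pos hε)))
  have hhead : Tendsto (fun n => (∑ m ∈ Finset.range M, α m * β m) / β n) atTop (𝓝 0) :=
    tendsto_const_nhds.div_atTop hβtop
  filter_upwards [hhead.eventually (ge_mem_nhds (half_pos hε))] with n hn
  calc decreasingMajorant α β n ≤ ε / 2 := (decreasingMajorant_le_max hαnn hβ hM n).trans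
        (max_le le_rfl hn)
    _ < ε := half_lt_self hε

theorem exists_antitone_majorant_mul_monotone (hα : ∀ n, 0 < α n)
    (hα0 : Tendsto α atTop (𝓝 0)) (hβ : ∀ n, 0 < β n) (hβmono : Monotone β)
    (hβtop : Tendsto β atTop atTop) :
    ∃ α' : ℕ → ℝ, (∀ n, 0 < α' n) ∧ (∀ n, α n ≤ α' n) ∧ Antitone α' ∧
      Tendsto α' atTop (𝓝 0) ∧ Monotone fun n => α' n * β n := by
  have hαnn : ∀ m, 0 ≤ α m := fun m => (hα m).le
  have hαb := hα0.bddAbove_range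
  exact ⟨decreasingMajorant α β,
    fun n => (hα n).trans_le (le_decreasingMajorant hαnn hαb hβ n),
    le_decreasingMajorant hαnn hαb hβ, antitone_decreasingMajorant hαnn hαb hβ hβmono,
    tendsto_decreasingMajorant hα hα0 hβ hβtop, monotone_decreasingMajorant_mul hαnn hαb hβ hβmono⟩

end DecreasingMajorant

theorem stmt0 (α β : ℕ → ℝ) (hαpos : ∀ n ≥ 1, 0 < α n) (hβpos : ∀ n ≥ 1, 0 < β n)
    (hα : Tendsto α atTop (nhds 0)) (hβmono : ∀ n ≥ 1, β n ≤ β (n + 1))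
    (hβ : Tendsto β atTop atTop) :
    ∃ α' : ℕ → ℝ, (∀ n ≥ 1, 0 < α' n) ∧ (∀ n ≥ 1, α n ≤ α' n) ∧
      (∀ n ≥ 1, α' (n + 1) ≤ α' n) ∧ Tendsto α' atTop (nhds 0) ∧
      (∀ n ≥ 1, α' n * β n ≤ α' (n + 1) * β (n + 1)) := by
  obtain ⟨δ, hδpos, hαδ, hδanti, hδ0, hδβ⟩ :=
    exists_antitone_majorant_mul_monotone (α := fun n => α (n + 1)) (β := fun n => β (n + 1))
      (fun n => hαpos _ n.succ_pos) (hα.comp (tendsto_add_atTop_nat 1))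
      (fun n => hβpos _ n.succ_pos) (monotone_nat_of_le_succ fun n => hβmono _ n.succ_pos)
      (hβ.comp (tendsto_add_atTop_nat 1))
  refine ⟨fun n => δ (n - 1), ?_, ?_, ?_, hδ0.comp (tendsto_sub_atTop_nat 1), ?_⟩ <;>
    intro n hn <;> obtain ⟨n, rfl⟩ := Nat.exists_eq_add_of_le' hn <;>
    simp only [Nat.add_sub_cancel]
  · exact hδpos n
  · exact hαδ n
  · exact hδanti n.le_succ
  · exact hδβ n.le_succ
end

section
/- Define L(x) = max{1, ln ln x} for x > e and L(x) = 1 for 0 < x ≤ e, and u_n = √(L(n)). Then for every e > 0 there is a constant C > 0 such that for all t > 0, ∑_{n : √n ≥ t > e√n/u_n} 1/(n u_n²) ≤ C, where the sum ranges over the positive integers n satisfying both √n ≥ t and t > e·√n/u_n. -/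
noncomputable def uSeq (n : ℕ) : ℝ := Real.sqrt (max 1 (Real.log (Real.log n)))

theorem stmt8 (e : ℝ) (he : 0 < e) :
    ∃ C > 0, ∀ t > 0,
      (∑' n : ℕ, Set.indicator
        {m : ℕ | 1 ≤ m ∧ t ≤ Real.sqrt m ∧ e * Real.sqrt m / uSeq m < t}
        (fun m => 1 / (m * (uSeq m) ^ 2)) n) ≤ C := by
  refine ⟨2 / e ^ 2, by positivity, fun t ht => ?_⟩
  set S := {m : ℕ | 1 ≤ m ∧ t ≤ Real.sqrt m ∧ e * Real.sqrt m / uSeq m < t} with hS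
  set f : ℕ → ℝ := Set.indicator S (fun m => 1 / (m * (uSeq m) ^ 2)) with hf
  set m := ⌈t ^ 2⌉₊ with hm
  have hm1 : 1 ≤ m := Nat.one_le_ceil_iff.mpr (by positivity)
  have htm : t ^ 2 ≤ (m : ℝ) := Nat.le_ceil _
  set h : ℕ → ℝ := fun n => if m ≤ n then ((n : ℝ) ^ 2)⁻¹ else 0 with hh
  have hh_nonneg : ∀ n, 0 ≤ h n := by
    intro n; rw [hh]; dsimp only; split <;> positivity
  have hh_summable : Summable h := by
    refine Summable.of_nonneg_of_le hh_nonneg (fun n => ?_)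
      (Real.summable_nat_pow_inv.mpr one_lt_two)
    rw [hh]; dsimp only; split
    · exact le_rfl
    · positivity
  set g : ℕ → ℝ := fun n => t ^ 2 / e ^ 2 * h n with hg
  have hg_summable : Summable g := hh_summable.mul_left _
  have hf_nonneg : ∀ n, 0 ≤ f n := by
    intro n
    apply Set.indicator_nonneg
    intro a _; positivity
  have hfg : ∀ n, f n ≤ g n := by
    intro n
    by_cases hn : n ∈ S
    · rw [hf, Set.indicator_of_mem hn]
      obtain ⟨h1, h2, h3⟩ := hn
      have hu1 : (1 : ℝ) ≤ uSeq n := by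
        rw [uSeq]
        nth_rewrite 1 [show (1 : ℝ) = Real.sqrt 1 by simp]
        exact Real.sqrt_le_sqrt (le_max_left _ _)
      have hu0 : (0 : ℝ) < uSeq n := lt_of_lt_of_le one_pos hu1
      have hn0 : (0 : ℝ) < n := by exact_mod_cast h1
      have hsq : Real.sqrt n ^ 2 = (n : ℝ) := Real.sq_sqrt hn0.le
      have h3' : e * Real.sqrt n < t * uSeq n := by
        rwa [div_lt_iff₀ hu0] at h3
      have key : e ^ 2 * n < t ^ 2 * uSeq n ^ 2 := by
        nlinarith [Real.sqrt_nonneg (n : ℝ), hsq, mul_pos he (Real.sqrt_pos.mpr hn0)]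
      have hmn : m ≤ n := by
        rw [hm]
        exact Nat.ceil_le.mpr (by nlinarith)
      rw [hg, hh]
      dsimp only
      rw [if_pos hmn]
      have heq : t ^ 2 / e ^ 2 * ((n : ℝ) ^ 2)⁻¹ = t ^ 2 / (e ^ 2 * (n : ℝ) ^ 2) := by
        field_simp
      rw [heq, div_le_div_iff₀ (by positivity) (by positivity)]
      nlinarith [mul_lt_mul_of_pos_right key hn0]
    · rw [hf, Set.indicator_of_notMem hn, hg]
      have := hh_nonneg n
      positivity
  have hf_summable : Summable f := Summable.of_nonneg_of_le hf_nonneg hfg hg_summable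
  have step1 : (∑' n, f n) ≤ ∑' n, g n := Summable.tsum_le_tsum hfg hf_summable hg_summable
  have step2 : (∑' n, g n) = t ^ 2 / e ^ 2 * ∑' n, h n := tsum_mul_left
  have step3 : (∑' n, h n) ≤ 2 / (m : ℝ) := by
    apply Summable.tsum_le_of_sum_le hh_summable
    intro s
    have hsub : s.filter (fun n => m ≤ n) ⊆ Finset.Ioo (m - 1) (s.sup id + 1) := by
      intro n hn
      rw [Finset.mem_filter] at hn
      have hle : n ≤ s.sup id := Finset.le_sup (f := id) hn.1
      rw [Finset.mem_Ioo]
      omega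
    calc ∑ n ∈ s, h n = ∑ n ∈ s.filter (fun n => m ≤ n), ((n : ℝ) ^ 2)⁻¹ := by
          rw [Finset.sum_filter]
      _ ≤ ∑ n ∈ Finset.Ioo (m - 1) (s.sup id + 1), ((n : ℝ) ^ 2)⁻¹ := by
          apply Finset.sum_le_sum_of_subset_of_nonneg hsub
          intro i _ _; positivity
      _ ≤ 2 / ((m - 1 : ℕ) + 1 : ℝ) := by
          have := sum_Ioo_inv_sq_le (α := ℝ) (m - 1) (s.sup id + 1)
          push_cast at this ⊢
          exact this
      _ = 2 / (m : ℝ) := by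
          congr 1
          have : (m - 1) + 1 = m := by omega
          exact_mod_cast congrArg (Nat.cast : ℕ → ℝ) this
  have hm0 : (0 : ℝ) < m := by exact_mod_cast hm1
  calc (∑' n, f n) ≤ t ^ 2 / e ^ 2 * ∑' n, h n := by rw [← step2]; exact step1
    _ ≤ t ^ 2 / e ^ 2 * (2 / t ^ 2) := by
        apply mul_le_mul_of_nonneg_left _ (by positivity)
        exact step3.trans (by apply div_le_div_of_nonneg_left (by norm_num) (by positivity) htm)
    _ = 2 / e ^ 2 := by field_simp
end

section
/- Let f : (0,1) → [0,∞) be measurable with ∫_0^1 f² < ∞, and for each positive integer n let w_n(t) = f(t)·1_{f(t) > √n}(t). Then ∑_{n=1}^∞ (1/√n) ∫_0^1 w_n(t) dt ≤ 2 ∫_0^1 f(t)² dt. -/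
open MeasureTheory

lemma key_sqrt (n : ℕ) : 1 / Real.sqrt (n+1) ≤ 2 * (Real.sqrt (n+1) - Real.sqrt n) := by
  have h1 : (0:ℝ) < Real.sqrt (n+1) := Real.sqrt_pos.mpr (by positivity)
  rw [div_le_iff₀ h1]
  have h2 : Real.sqrt n * Real.sqrt (n+1) ≤ (n:ℝ) + 1/2 := by
    rw [← Real.sqrt_mul (by positivity)]
    calc Real.sqrt ((n:ℝ)*(n+1)) ≤ Real.sqrt (((n:ℝ) + 1/2)^2) :=
          Real.sqrt_le_sqrt (by nlinarith)
      _ = (n:ℝ) + 1/2 := Real.sqrt_sq (by positivity)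
  have h3 : Real.sqrt (n+1) * Real.sqrt (n+1) = (n:ℝ)+1 :=
    Real.mul_self_sqrt (by positivity)
  nlinarith [h2, h3]

lemma sum_bound (a : ℝ) (ha : 0 ≤ a) (s : Finset ℕ) :
    ∑ n ∈ s, (1 / Real.sqrt (n+1)) * (if Real.sqrt (n+1) < a then a else 0)
      ≤ 2 * a^2 := by
  classical
  set N := Nat.floor (a^2) with hN
  have htel : ∑ n ∈ Finset.range N, (Real.sqrt (n+1) - Real.sqrt n) = Real.sqrt N := by
    have h := Finset.sum_range_sub (fun n : ℕ => Real.sqrt n) N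
    simp only [Nat.cast_zero, Real.sqrt_zero, sub_zero] at h
    rw [← h]
    apply Finset.sum_congr rfl
    intro n _
    push_cast
    ring_nf
  have hsub : s.filter (fun n : ℕ => Real.sqrt ((n:ℝ)+1) < a) ⊆ Finset.range N := by
    intro n hn
    rw [Finset.mem_filter] at hn
    have hlt : ((n:ℝ)+1) < a^2 := by
      have hs : Real.sqrt ((n:ℝ)+1) < a := hn.2
      nlinarith [Real.sq_sqrt (by positivity : (0:ℝ) ≤ (n:ℝ)+1),
        Real.sqrt_nonneg ((n:ℝ)+1)]
    rw [Finset.mem_range]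
    have : (n+1 : ℕ) ≤ N := Nat.le_floor (by push_cast; linarith)
    omega
  calc ∑ n ∈ s, (1 / Real.sqrt (n+1)) * (if Real.sqrt (n+1) < a then a else 0)
      = ∑ n ∈ s.filter (fun n : ℕ => Real.sqrt ((n:ℝ)+1) < a), (1 / Real.sqrt (n+1)) * a := by
        rw [Finset.sum_filter]
        apply Finset.sum_congr rfl
        intro n _
        split_ifs <;> simp
    _ ≤ ∑ n ∈ s.filter (fun n : ℕ => Real.sqrt ((n:ℝ)+1) < a),
          2 * (Real.sqrt (n+1) - Real.sqrt n) * a := by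
        apply Finset.sum_le_sum
        intro n _
        exact mul_le_mul_of_nonneg_right (key_sqrt n) ha
    _ ≤ ∑ n ∈ Finset.range N, 2 * (Real.sqrt (n+1) - Real.sqrt n) * a := by
        apply Finset.sum_le_sum_of_subset_of_nonneg hsub
        intro n _ _
        have : Real.sqrt n ≤ Real.sqrt (n+1) := Real.sqrt_le_sqrt (by linarith)
        nlinarith
    _ = 2 * a * Real.sqrt N := by
        rw [← htel, Finset.mul_sum]
        apply Finset.sum_congr rfl
        intro n _
        ring
    _ ≤ 2 * a * a := by
        apply mul_le_mul_of_nonneg_left _ (by linarith)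
        calc Real.sqrt N ≤ Real.sqrt (a^2) :=
              Real.sqrt_le_sqrt (Nat.floor_le (by positivity))
          _ = a := Real.sqrt_sq ha
    _ = 2 * a^2 := by ring

theorem stmt10 (f : ℝ → ℝ) (hmeas : Measurable f)
    (hnonneg : ∀ t ∈ Set.Ioo (0:ℝ) 1, 0 ≤ f t)
    (hint : IntegrableOn (fun t => f t ^ 2) (Set.Ioo 0 1)) :
    (∑' n : ℕ, (1 / Real.sqrt (n + 1)) *
        ∫ t in Set.Ioo (0:ℝ) 1, Set.indicator {t : ℝ | Real.sqrt (n + 1) < f t} f t)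
      ≤ 2 * ∫ t in Set.Ioo (0:ℝ) 1, f t ^ 2 := by
  have hIsq : 0 ≤ ∫ t in Set.Ioo (0:ℝ) 1, f t ^ 2 :=
    integral_nonneg (fun t => sq_nonneg _)
  have hWmeas : ∀ n : ℕ,
      Measurable (fun t => Set.indicator {t : ℝ | Real.sqrt (n + 1) < f t} f t) := by
    intro n
    exact hmeas.indicator (measurableSet_lt measurable_const hmeas)
  have hW : ∀ n : ℕ, IntegrableOn
      (fun t => Set.indicator {t : ℝ | Real.sqrt (n + 1) < f t} f t) (Set.Ioo 0 1) := by
    intro n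
    apply Integrable.mono' hint (hWmeas n).aestronglyMeasurable
    filter_upwards with t
    rw [Set.indicator_apply]
    split_ifs with h
    · rw [Set.mem_setOf_eq] at h
      have h1 : (1:ℝ) ≤ Real.sqrt (n+1) := by
        rw [Real.one_le_sqrt]
        push_cast; linarith
      have hf1 : (1:ℝ) ≤ f t := le_trans h1 (le_of_lt h)
      rw [Real.norm_eq_abs, abs_of_nonneg (by linarith)]
      nlinarith
    · simp [sq_nonneg]
  apply tsum_le_of_sum_le' (by linarith)
  intro s
  have hconst : ∀ n : ℕ, IntegrableOn
      (fun t => (1 / Real.sqrt (n+1)) *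
        Set.indicator {t : ℝ | Real.sqrt (n + 1) < f t} f t) (Set.Ioo 0 1) :=
    fun n => (hW n).const_mul _
  calc ∑ n ∈ s, (1 / Real.sqrt (n + 1)) *
        ∫ t in Set.Ioo (0:ℝ) 1, Set.indicator {t : ℝ | Real.sqrt (n + 1) < f t} f t
      = ∑ n ∈ s, ∫ t in Set.Ioo (0:ℝ) 1,
          (1 / Real.sqrt (n + 1)) * Set.indicator {t : ℝ | Real.sqrt (n + 1) < f t} f t := by
        apply Finset.sum_congr rfl
        intro n _
        rw [integral_const_mul]
    _ = ∫ t in Set.Ioo (0:ℝ) 1, ∑ n ∈ s,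
          (1 / Real.sqrt (n + 1)) * Set.indicator {t : ℝ | Real.sqrt (n + 1) < f t} f t :=
        (integral_finset_sum s (fun n _ => hconst n)).symm
    _ ≤ ∫ t in Set.Ioo (0:ℝ) 1, 2 * f t ^ 2 := by
        apply setIntegral_mono_on
          (integrable_finset_sum s (fun n _ => hconst n))
          (hint.const_mul 2) measurableSet_Ioo
        intro t ht
        have hb := sum_bound (f t) (hnonneg t ht) s
        calc ∑ n ∈ s, (1 / Real.sqrt (n + 1)) *
              Set.indicator {t : ℝ | Real.sqrt (n + 1) < f t} f t
            = ∑ n ∈ s, (1 / Real.sqrt (n+1)) *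
              (if Real.sqrt (n+1) < f t then f t else 0) := by
              apply Finset.sum_congr rfl
              intro n _
              rw [Set.indicator_apply]
              rfl
          _ ≤ 2 * f t ^ 2 := hb
    _ = 2 * ∫ t in Set.Ioo (0:ℝ) 1, f t ^ 2 := integral_const_mul 2 _
end

section
/- (Golden–Thompson inequality for matrices) For Hermitian n×n complex matrices a and b, tr(e^{a+b}) ≤ tr(e^a e^b). -/
/-!
By the Lie product formula, `exp (a + b)` is the limit of `(exp (a / 2^k) * exp (b / 2^k)) ^ 2^k`;
it follows from `exp (t a) exp (t b) = exp (t (a + b)) + o(t)` and the telescoping bound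
`‖x ^ N - y ^ N‖ ≤ N K ^ (N - 1) ‖x - y‖`. So it suffices to show
`re tr ((X Y) ^ 2^k) ≤ re tr (X ^ 2^k Y ^ 2^k)` for Hermitian `X`, `Y`. This is proved by induction
on `k` simultaneously with `‖tr (D ^ 2^(k+1))‖ ≤ re tr ((Dᴴ D) ^ 2^k)` for arbitrary `D`:
the latter for `D = X Y` gives the former at level `k + 1`, since `(X Y)ᴴ (X Y)` is a cyclic
permutation of `X² Y²`; and the latter at level `k + 1` follows from the latter for `D²`, the former
for `Dᴴ D` and `D Dᴴ`, and the Cauchy–Schwarz inequality for `⟪U, V⟫ = tr (Uᴴ V)`.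
-/

open NormedSpace Filter Asymptotics RCLike
open scoped Matrix Topology ComplexOrder

section LieProduct

variable {𝔸 : Type*} [NormedRing 𝔸]

theorem norm_pow_succ_sub_pow_succ_le {x y : 𝔸} {K : ℝ} (hx : ‖x‖ ≤ K) (hy : ‖y‖ ≤ K) (N : ℕ) :
    ‖x ^ (N + 1) - y ^ (N + 1)‖ ≤ (N + 1) * K ^ N * ‖x - y‖ := by
  induction N with
  | zero => simp
  | succ N ih =>
    have hK : 0 ≤ K := (norm_nonneg x).trans hx
    have hxN : ‖x ^ (N + 1)‖ ≤ K ^ (N + 1) :=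
      (norm_pow_le' x N.succ_pos).trans (pow_le_pow_left₀ (norm_nonneg x) hx _)
    calc ‖x ^ (N + 2) - y ^ (N + 2)‖
        = ‖x ^ (N + 1) * (x - y) + (x ^ (N + 1) - y ^ (N + 1)) * y‖ := by
          congr 1; noncomm_ring
      _ ≤ K ^ (N + 1) * ‖x - y‖ + (N + 1) * K ^ N * ‖x - y‖ * K := by
          grw [norm_add_le, norm_mul_le, norm_mul_le, hxN, ih, hy]
      _ = (↑(N + 1) + 1) * K ^ (N + 1) * ‖x - y‖ := by push_cast; ring

variable [NormedAlgebra ℝ 𝔸]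

theorem norm_exp_le [NormOneClass 𝔸] (x : 𝔸) : ‖exp x‖ ≤ Real.exp ‖x‖ := by
  rw [exp_eq_tsum ℝ, Real.exp_eq_exp_ℝ, exp_eq_tsum_div]
  refine tsum_of_norm_bounded (Real.summable_pow_div_factorial ‖x‖).hasSum fun n => ?_
  rw [norm_smul, norm_inv, Real.norm_natCast, div_eq_inv_mul]
  gcongr
  exact norm_pow_le x n

variable [CompleteSpace 𝔸]

theorem exp_inv_smul_pow {N : ℕ} (hN : N ≠ 0) (x : 𝔸) : exp ((N : ℝ)⁻¹ • x) ^ N = exp x := by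
  -- `exp_nsmul` is stated for `ℚ`-algebras; `exp` itself does not depend on this choice.
  let : NormedAlgebra ℚ 𝔸 := NormedAlgebra.restrictScalars ℚ ℝ 𝔸
  rw [← exp_nsmul, ← Nat.cast_smul_eq_nsmul ℝ, smul_smul, mul_inv_cancel₀ (by exact_mod_cast hN),
    one_smul]

theorem exp_smul_mul_exp_smul_sub_exp_smul_add_isLittleO (a b : 𝔸) :
    (fun t : ℝ => exp (t • a) * exp (t • b) - exp (t • (a + b))) =o[𝓝 0] fun t => t := by
  have h := ((hasDerivAt_exp_smul_const a (0 : ℝ)).mul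
    (hasDerivAt_exp_smul_const b (0 : ℝ))).sub (hasDerivAt_exp_smul_const (a + b) (0 : ℝ))
  rw [hasDerivAt_iff_isLittleO] at h
  simpa using h

/-- The Lie product formula. -/
theorem tendsto_exp_inv_smul_mul_exp_inv_smul_pow [NormOneClass 𝔸] (a b : 𝔸) :
    Tendsto (fun N : ℕ => (exp ((N : ℝ)⁻¹ • a) * exp ((N : ℝ)⁻¹ • b)) ^ N) atTop
      (𝓝 (exp (a + b))) := by
  set G := fun t : ℝ => exp (t • a) * exp (t • b) - exp (t • (a + b))
  have hG : Tendsto (fun N : ℕ => N * ‖G (N : ℝ)⁻¹‖) atTop (𝓝 0) := by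
    have := ((exp_smul_mul_exp_smul_sub_exp_smul_add_isLittleO a b).comp_tendsto
      tendsto_inv_atTop_nhds_zero_nat).norm_left.tendsto_div_nhds_zero
    simpa [G, div_eq_mul_inv, mul_comm] using this
  have bound (N : ℕ) :
      ‖(exp ((N + 1 : ℝ)⁻¹ • a) * exp ((N + 1 : ℝ)⁻¹ • b)) ^ (N + 1) - exp (a + b)‖
        ≤ Real.exp (‖a‖ + ‖b‖) * ((N + 1) * ‖G (N + 1)⁻¹‖) := by
    set t : ℝ := (N + 1 : ℝ)⁻¹
    have ht : 0 ≤ t := by positivity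
    have hx : ‖exp (t • a) * exp (t • b)‖ ≤ Real.exp (t * (‖a‖ + ‖b‖)) := by
      grw [norm_mul_le, norm_exp_le, norm_exp_le, ← Real.exp_add, norm_smul, norm_smul,
        Real.norm_of_nonneg ht, mul_add]
    have hy : ‖exp (t • (a + b))‖ ≤ Real.exp (t * (‖a‖ + ‖b‖)) := by
      grw [norm_exp_le, norm_smul, Real.norm_of_nonneg ht, norm_add_le]
    have hpow : exp (t • (a + b)) ^ (N + 1) = exp (a + b) := by
      simpa [t] using exp_inv_smul_pow N.succ_ne_zero (a + b)
    have hK : Real.exp (t * (‖a‖ + ‖b‖)) ^ N ≤ Real.exp (‖a‖ + ‖b‖) := by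
      rw [← Real.exp_nat_mul, ← mul_assoc]
      gcongr
      exact mul_le_of_le_one_left (by positivity) (by grind)
    calc _ = ‖(exp (t • a) * exp (t • b)) ^ (N + 1) - exp (t • (a + b)) ^ (N + 1)‖ := by
          rw [hpow]
      _ ≤ (N + 1) * Real.exp (t * (‖a‖ + ‖b‖)) ^ N * ‖G t‖ :=
          norm_pow_succ_sub_pow_succ_le hx hy N
      _ ≤ _ := by grw [hK]; exact le_of_eq (by ring)
  rw [← tendsto_add_atTop_iff_nat 1, tendsto_iff_norm_sub_tendsto_zero]
  refine squeeze_zero (fun _ => norm_nonneg _) (fun N => by exact_mod_cast bound N) ?_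
  simpa using ((tendsto_add_atTop_iff_nat 1).2 hG).const_mul (Real.exp (‖a‖ + ‖b‖))

end LieProduct

namespace Matrix

variable {m n R 𝕜 : Type*} [Fintype m] [Fintype n] [RCLike 𝕜]

theorem IsHermitian.isSelfAdjoint_trace [AddCommMonoid R] [StarAddMonoid R] {A : Matrix m m R}
    (hA : A.IsHermitian) : IsSelfAdjoint A.trace := by
  rw [IsSelfAdjoint, ← trace_conjTranspose, hA.eq]

theorem IsHermitian.isSelfAdjoint_trace_mul [CommSemiring R] [StarRing R] {A B : Matrix m m R}
    (hA : A.IsHermitian) (hB : B.IsHermitian) : IsSelfAdjoint (A * B).trace := by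
  rw [IsSelfAdjoint, ← trace_conjTranspose, conjTranspose_mul, hA.eq, hB.eq, trace_mul_comm]

theorem trace_mul_pow_comm [CommSemiring R] [DecidableEq m] (U V : Matrix m m R) (N : ℕ) :
    ((U * V) ^ N).trace = ((V * U) ^ N).trace := by
  cases N with
  | zero => rfl
  | succ N =>
    rw [pow_succ', mul_assoc, trace_mul_comm, mul_assoc, mul_pow_mul, ← mul_assoc, ← pow_succ']

theorem norm_trace_conjTranspose_mul_le (U V : Matrix m n 𝕜) :
    ‖(Uᴴ * V).trace‖ ≤ √(re (Uᴴ * U).trace) * √(re (Vᴴ * V).trace) := by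
  have inner_eq (U V : Matrix m n 𝕜) :
      inner 𝕜 (WithLp.toLp 2 U.vec) (WithLp.toLp 2 V.vec) = (Uᴴ * V).trace := by
    rw [EuclideanSpace.inner_toLp_toLp, dotProduct_comm, star_vec_dotProduct_vec]
  simpa only [inner_eq, norm_eq_sqrt_re_inner (𝕜 := 𝕜)] using
    norm_inner_le_norm (𝕜 := 𝕜) (WithLp.toLp 2 U.vec) (WithLp.toLp 2 V.vec)

theorem norm_trace_conjTranspose_mul_le_of_trace_eq {U V : Matrix m n 𝕜}
    (h : (Vᴴ * V).trace = (Uᴴ * U).trace) : ‖(Uᴴ * V).trace‖ ≤ re (Uᴴ * U).trace := by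
  have hU : 0 ≤ re (Uᴴ * U).trace :=
    (RCLike.nonneg_iff.mp (posSemidef_conjTranspose_mul_self U).trace_nonneg).1
  simpa only [h, Real.mul_self_sqrt hU] using norm_trace_conjTranspose_mul_le U V

variable [DecidableEq m]

theorem trace_pow_two_pow_bounds (k : ℕ) :
    (∀ D : Matrix m m 𝕜, ‖(D ^ 2 ^ (k + 1)).trace‖ ≤ re ((Dᴴ * D) ^ 2 ^ k).trace) ∧
    ∀ X Y : Matrix m m 𝕜, X.IsHermitian → Y.IsHermitian →
      re ((X * Y) ^ 2 ^ k).trace ≤ re (X ^ 2 ^ k * Y ^ 2 ^ k).trace := by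
  induction k with
  | zero =>
    refine ⟨fun D => ?_, fun X Y _ _ => by simp only [pow_zero, pow_one, le_refl]⟩
    have h := norm_trace_conjTranspose_mul_le_of_trace_eq (U := Dᴴ) (V := D)
      (by rw [conjTranspose_conjTranspose, trace_mul_comm])
    rw [conjTranspose_conjTranspose, ← sq, trace_mul_comm] at h
    simpa only [zero_add, pow_one, pow_zero, mul_one] using h
  | succ k ih =>
    obtain ⟨normBound, reBound⟩ := ih
    refine ⟨fun D => ?_, fun X Y hX hY => ?_⟩
    · have hP : (Dᴴ * D).IsHermitian := isHermitian_conjTranspose_mul_self D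
      have hQ : (D * Dᴴ).IsHermitian := isHermitian_mul_conjTranspose_self D
      calc ‖(D ^ 2 ^ (k + 2)).trace‖
          = ‖((D ^ 2) ^ 2 ^ (k + 1)).trace‖ := by rw [← pow_mul, ← pow_succ']
        _ ≤ re (((D ^ 2)ᴴ * D ^ 2) ^ 2 ^ k).trace := normBound _
        _ = re ((Dᴴ * D * (D * Dᴴ)) ^ 2 ^ k).trace := by
          rw [sq, conjTranspose_mul, mul_assoc, trace_mul_pow_comm]; simp only [mul_assoc]
        _ ≤ re ((Dᴴ * D) ^ 2 ^ k * (D * Dᴴ) ^ 2 ^ k).trace := reBound _ _ hP hQ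
        _ ≤ ‖((Dᴴ * D) ^ 2 ^ k * (D * Dᴴ) ^ 2 ^ k).trace‖ := re_le_norm _
        _ ≤ re ((Dᴴ * D) ^ 2 ^ (k + 1)).trace := by
          have hU := (hP.pow (2 ^ k)).eq
          have hV := (hQ.pow (2 ^ k)).eq
          have h := norm_trace_conjTranspose_mul_le_of_trace_eq (U := (Dᴴ * D) ^ 2 ^ k)
            (V := (D * Dᴴ) ^ 2 ^ k) (by rw [hU, hV, ← pow_add, ← pow_add, trace_mul_pow_comm])
          rwa [hU, ← pow_add, ← two_mul, ← pow_succ'] at h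
    · calc re ((X * Y) ^ 2 ^ (k + 1)).trace
          ≤ ‖((X * Y) ^ 2 ^ (k + 1)).trace‖ := re_le_norm _
        _ ≤ re (((X * Y)ᴴ * (X * Y)) ^ 2 ^ k).trace := normBound _
        _ = re ((X ^ 2 * Y ^ 2) ^ 2 ^ k).trace := by
          rw [conjTranspose_mul, hX.eq, hY.eq, mul_assoc, trace_mul_pow_comm]
          simp only [sq, mul_assoc]
        _ ≤ re ((X ^ 2) ^ 2 ^ k * (Y ^ 2) ^ 2 ^ k).trace := reBound _ _ (hX.pow 2) (hY.pow 2)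
        _ = re (X ^ 2 ^ (k + 1) * Y ^ 2 ^ (k + 1)).trace := by simp only [← pow_mul, ← pow_succ']

theorem re_trace_mul_pow_two_pow_le {X Y : Matrix m m 𝕜} (hX : X.IsHermitian)
    (hY : Y.IsHermitian) (k : ℕ) :
    re ((X * Y) ^ 2 ^ k).trace ≤ re (X ^ 2 ^ k * Y ^ 2 ^ k).trace :=
  (trace_pow_two_pow_bounds k).2 X Y hX hY

section LinftyOpNorm

attribute [local instance] Matrix.linftyOpNormedRing Matrix.linftyOpNormedAlgebra

theorem re_trace_exp_add_le {a b : Matrix m m 𝕜} (ha : a.IsHermitian) (hb : b.IsHermitian) :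
    re (exp (a + b)).trace ≤ re (exp a * exp b).trace := by
  -- The operator norm has `‖1‖ = 1` only for nonempty `m`.
  rcases isEmpty_or_nonempty m with hm | hm
  · simp [trace]
  have lim := (tendsto_exp_inv_smul_mul_exp_inv_smul_pow a b).comp
    (tendsto_pow_atTop_atTop_of_one_lt one_lt_two)
  refine le_of_tendsto' ((continuous_re.comp continuous_id.matrix_trace).tendsto _ |>.comp lim)
    fun k => ?_
  have hsmul {x : Matrix m m 𝕜} (hx : x.IsHermitian) : (((2 ^ k : ℕ) : ℝ)⁻¹ • x).IsHermitian :=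
    hx.smul (.all _)
  have hpow (x : Matrix m m 𝕜) : exp (((2 ^ k : ℕ) : ℝ)⁻¹ • x) ^ 2 ^ k = exp x :=
    exp_inv_smul_pow (pow_ne_zero k two_ne_zero) x
  have h := re_trace_mul_pow_two_pow_le (hsmul ha).exp (hsmul hb).exp k
  rwa [hpow, hpow] at h

end LinftyOpNorm

end Matrix

theorem stmt12 (n : ℕ) (a b : Matrix (Fin n) (Fin n) ℂ)
    (ha : a.IsHermitian) (hb : b.IsHermitian) :
    (NormedSpace.exp (a + b)).trace ≤ (NormedSpace.exp a * NormedSpace.exp b).trace := by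
  refine Complex.le_def.2 ⟨Matrix.re_trace_exp_add_le ha hb, ?_⟩
  rw [Complex.conj_eq_iff_im.1 (ha.add hb).exp.isSelfAdjoint_trace,
    Complex.conj_eq_iff_im.1 (ha.exp.isSelfAdjoint_trace_mul hb.exp)]
end

section
/- For all reals s and M with |s| ≤ M and M > 0, one has e^s − s − 1 ≤ ((e^M − M − 1)/M²)·s². -/
open Real

lemma exp_tail_eq (x : ℝ) :
    Real.exp x - x - 1 = ∑' n : ℕ, x ^ (n + 2) / (Nat.factorial (n + 2) : ℝ) := by
  have hsum := Real.summable_pow_div_factorial x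
  have h := Summable.sum_add_tsum_nat_add (f := fun n : ℕ => x ^ n / (Nat.factorial n : ℝ)) 2 hsum
  have hexp : Real.exp x = ∑' n : ℕ, x ^ n / (Nat.factorial n : ℝ) := by
    rw [Real.exp_eq_exp_ℝ, NormedSpace.exp_eq_tsum_div]
  rw [hexp, ← h]
  simp [Finset.sum_range_succ, Nat.factorial]
  ring

lemma key (t M : ℝ) (ht : 0 ≤ t) (htM : t ≤ M) (hM : 0 < M) :
    Real.exp t - t - 1 ≤ (Real.exp M - M - 1) / M ^ 2 * t ^ 2 := by
  rw [exp_tail_eq, exp_tail_eq]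
  have hsum : Summable (fun n : ℕ => M ^ (n + 2) / (Nat.factorial (n + 2) : ℝ)) :=
    (Real.summable_pow_div_factorial M).comp_injective (add_left_injective 2)
  calc ∑' n : ℕ, t ^ (n + 2) / (Nat.factorial (n + 2) : ℝ)
      ≤ ∑' n : ℕ, t ^ 2 / M ^ 2 * (M ^ (n + 2) / (Nat.factorial (n + 2) : ℝ)) := by
        refine Summable.tsum_le_tsum (fun n => ?_)
          ((Real.summable_pow_div_factorial t).comp_injective (add_left_injective 2))
          (hsum.mul_left _)
        have hc : (0 : ℝ) < (Nat.factorial (n + 2) : ℝ) := by positivity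
        have h3 : t ^ 2 / M ^ 2 * (M ^ (n + 2) / (Nat.factorial (n + 2) : ℝ))
            = t ^ 2 * M ^ n / (Nat.factorial (n + 2) : ℝ) := by
          field_simp; ring
        have h4 : t ^ (n + 2) = t ^ 2 * t ^ n := by ring
        rw [h3, h4]
        gcongr
    _ = t ^ 2 / M ^ 2 * ∑' n : ℕ, M ^ (n + 2) / (Nat.factorial (n + 2) : ℝ) :=
        hsum.tsum_mul_left _
    _ = (∑' n : ℕ, M ^ (n + 2) / (Nat.factorial (n + 2) : ℝ)) / M ^ 2 * t ^ 2 := by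
        ring

theorem stmt14 (s M : ℝ) (hM : 0 < M) (hs : |s| ≤ M) :
    Real.exp s - s - 1 ≤ (Real.exp M - M - 1) / M ^ 2 * s ^ 2 := by
  have h1 : Real.exp s - s - 1 ≤ Real.exp |s| - |s| - 1 := by
    rcases abs_cases s with ⟨h, _⟩ | ⟨h, hneg⟩
    · rw [h]
    · rw [h]
      have hsinh : Real.sinh s ≤ s := by
        have h0 : 0 < -s := by linarith
        have := (Real.self_lt_sinh_iff.mpr h0).le
        rw [Real.sinh_neg] at this; linarith
      rw [Real.sinh_eq] at hsinh
      linarith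
  calc Real.exp s - s - 1 ≤ Real.exp |s| - |s| - 1 := h1
    _ ≤ (Real.exp M - M - 1) / M ^ 2 * |s| ^ 2 := key _ _ (abs_nonneg s) hs hM
    _ = (Real.exp M - M - 1) / M ^ 2 * s ^ 2 := by rw [sq_abs]
end
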